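/- arXiv:2110.12208 — 3 statements merged into one kernel-verified Lean document; each statement's English description precedes it below -/
import Mathlib

section
/- Let $M$ be a compact, geodesically convex set in $\mathbb{R}^d$ with reach $r_0 > 0$, and let $\varepsilon_n \to 0$ with $\tau_n = d_H(\mathcal{X}_n, M)/\varepsilon_n \to 0$ and $\varepsilon_n < 2 r_0$ for large $n$. Let $G_n$ be the graph on $\mathcal{X}_n$ with edges between points at Euclidean distance at most $\varepsilon_n$. Then for all $x, y \in M$ and $n$ large: $\left(1 - \frac{1}{24}\left(\frac{\pi \varepsilon_n}{2 r_0}\right)^2\right) d_M(x,y) \le d_{G_n}(x,y) \le (1 + 4\tau_n) d_M(x,y)$, where $d_{G_n}(x,y)$ includes $x, y$ as vertices of the graph. -/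
/-!
Lower bound: an edge `u v` of the graph has `‖u - v‖ ≤ ε < 2 r₀`, so the arcsin form of the reach
gives `d_M(u, v) ≤ 2 r₀ arcsin (‖u - v‖ / 2 r₀)`. With `s = arcsin t`, Jordan's inequality
`s ≤ π t / 2` and `sin s ≥ s - s³ / 6` turn this into
`(1 - (π ε / 2 r₀)² / 24) d_M(u, v) ≤ ‖u - v‖`; sum over the path and use the triangle inequality for `d_M`.

Upper bound: let `δ` be the Hausdorff distance, so eventually `4 δ ≤ ε`. Cut a minimising curve
greedily into `p + 1` chords, the first `p` of length exactly `ε - 2 δ`; they use up variation, so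
`p (ε - 2 δ) ≤ d_M(x, y)`. Moving the `p` interior cut points to sample points within `δ` gives a
path with edges at most `ε` and length at most `d_M(x, y) + 2 δ p ≤ (1 + 4 δ / ε) d_M(x, y)`.
-/

open Set Metric Filter

/-- Length-in-`ℝ≥0∞` geodesic (intrinsic) distance inside `M`. -/
noncomputable def geoDistE {d : ℕ} (M : Set (EuclideanSpace ℝ (Fin d)))
    (x y : EuclideanSpace ℝ (Fin d)) : ENNReal :=
  ⨅ (γ : ℝ → EuclideanSpace ℝ (Fin d)) (_ : ContinuousOn γ (Set.Icc 0 1))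
    (_ : Set.MapsTo γ (Set.Icc 0 1) M) (_ : γ 0 = x) (_ : γ 1 = y),
    eVariationOn γ (Set.Icc 0 1)

/-- Geodesic (intrinsic) distance inside `M`, as a real number. -/
noncomputable def geoDist {d : ℕ} (M : Set (EuclideanSpace ℝ (Fin d)))
    (x y : EuclideanSpace ℝ (Fin d)) : ℝ :=
  (geoDistE M x y).toReal

/-- Geodesic convexity: any two points of `M` are joined by a curve inside `M`
whose length equals the geodesic distance. -/
def GeodesicallyConvex {d : ℕ} (M : Set (EuclideanSpace ℝ (Fin d))) : Prop :=
  ∀ x ∈ M, ∀ y ∈ M, ∃ γ : ℝ → EuclideanSpace ℝ (Fin d),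
    ContinuousOn γ (Set.Icc 0 1) ∧ Set.MapsTo γ (Set.Icc 0 1) M ∧
    γ 0 = x ∧ γ 1 = y ∧ eVariationOn γ (Set.Icc 0 1) = ENNReal.ofReal (geoDist M x y)

/-- Graph distance over paths through `V` with edges given by `Edge`:
the infimum of total Euclidean edge lengths over paths joining `x` to `y`. -/
noncomputable def graphDistRel {d : ℕ} (V : Set (EuclideanSpace ℝ (Fin d)))
    (Edge : EuclideanSpace ℝ (Fin d) → EuclideanSpace ℝ (Fin d) → Prop)
    (x y : EuclideanSpace ℝ (Fin d)) : ℝ :=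
  sInf {L : ℝ | ∃ (p : ℕ) (w : ℕ → EuclideanSpace ℝ (Fin d)),
    w 0 = x ∧ w p = y ∧ (∀ i ≤ p, w i ∈ V) ∧ (∀ i < p, Edge (w i) (w (i + 1))) ∧
    L = ∑ i ∈ Finset.range p, ‖w (i + 1) - w i‖}

/-- Graph distance for the ε-neighborhood graph on vertex set `V`. -/
noncomputable def graphDist {d : ℕ} (V : Set (EuclideanSpace ℝ (Fin d))) (ε : ℝ)
    (x y : EuclideanSpace ℝ (Fin d)) : ℝ :=
  graphDistRel V (fun u v => ‖u - v‖ ≤ ε) x y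
section Trigonometry
open Real

theorem one_sub_mul_arcsin_le {T t : ℝ} (hT : T ≤ 1) (ht : 0 ≤ t) (htT : t ≤ T) :
    (1 - 1 / 24 * (π * T) ^ 2) * arcsin t ≤ t := by
  set s := arcsin t
  have hs : 0 ≤ s := arcsin_nonneg.2 ht
  have hsin : sin s = t := sin_arcsin (by linarith) (htT.trans hT)
  have hs_le : s ≤ π / 2 * T := by
    have hjordan := hsin ▸ mul_le_sin hs (arcsin_le_pi_div_two t)
    have := pi_pos
    calc s = π / 2 * (2 / π * s) := by field_simp
      _ ≤ π / 2 * T := by gcongr; linarith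
  have hsq : s ^ 2 ≤ (π * T) ^ 2 / 4 := by
    calc s ^ 2 ≤ (π / 2 * T) ^ 2 := pow_le_pow_left₀ hs hs_le 2
      _ = (π * T) ^ 2 / 4 := by ring
  nlinarith [hsin ▸ sin_ge_sub_cube hs, mul_le_mul_of_nonneg_left hsq hs]

theorem one_sub_sq_pi_mul_nonneg {T : ℝ} (hT₀ : 0 ≤ T) (hT : T ≤ 1) :
    0 ≤ 1 - 1 / 24 * (π * T) ^ 2 := by
  have h : π * T ≤ 4 := by nlinarith [pi_le_four, pi_pos]
  nlinarith [mul_nonneg pi_pos.le hT₀]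

end Trigonometry

section Curves

variable {E : Type*}

def IsCurveIn [TopologicalSpace E] (M : Set E) (γ : ℝ → E) (x y : E) : Prop :=
  ContinuousOn γ (Icc 0 1) ∧ MapsTo γ (Icc 0 1) M ∧ γ 0 = x ∧ γ 1 = y

noncomputable def curveConcat (γ₁ γ₂ : ℝ → E) (t : ℝ) : E :=
  if t ≤ 1 / 2 then γ₁ (2 * t) else γ₂ (2 * t - 1)

-- The halves are written as `c * t + e` so that `eVariationOn_comp_affine` applies verbatim.
theorem curveConcat_eqOn_left (γ₁ γ₂ : ℝ → E) :
    EqOn (curveConcat γ₁ γ₂) (fun t => γ₁ (2 * t + 0)) (Icc 0 (1 / 2)) := fun t ht => by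
  simp only [curveConcat, if_pos ht.2, add_zero]

theorem curveConcat_eqOn_right {γ₁ γ₂ : ℝ → E} (h : γ₁ 1 = γ₂ 0) :
    EqOn (curveConcat γ₁ γ₂) (fun t => γ₂ (2 * t + -1)) (Icc (1 / 2) 1) := fun t ht => by
  rcases ht.1.eq_or_lt with rfl | hlt
  · norm_num [curveConcat, h]
  · simp only [curveConcat, if_neg (not_le.2 hlt), sub_eq_add_neg]

theorem mapsTo_affine_Icc {a b c e : ℝ} (hc : 0 < c) :
    MapsTo (fun t => c * t + e) (Icc a b) (Icc (c * a + e) (c * b + e)) := by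
  rw [← image_affine_Icc' hc]
  exact mapsTo_image _ _

theorem IsCurveIn.concat [TopologicalSpace E] {M : Set E} {γ₁ γ₂ : ℝ → E} {x y z : E}
    (h₁ : IsCurveIn M γ₁ x y) (h₂ : IsCurveIn M γ₂ y z) :
    IsCurveIn M (curveConcat γ₁ γ₂) x z := by
  obtain ⟨hc₁, hM₁, h0₁, h1₁⟩ := h₁
  obtain ⟨hc₂, hM₂, h0₂, h1₂⟩ := h₂
  have hjoin : γ₁ 1 = γ₂ 0 := h1₁.trans h0₂.symm
  have hleft := curveConcat_eqOn_left γ₁ γ₂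
  have hright := curveConcat_eqOn_right hjoin
  have mleft : MapsTo (fun t : ℝ => 2 * t + 0) (Icc 0 (1 / 2)) (Icc 0 1) := by
    convert mapsTo_affine_Icc (a := 0) (b := 1 / 2) (e := 0) two_pos using 2 <;> norm_num
  have mright : MapsTo (fun t : ℝ => 2 * t + -1) (Icc (1 / 2) 1) (Icc 0 1) := by
    convert mapsTo_affine_Icc (a := 1 / 2) (b := 1) (e := -1) two_pos using 2 <;> norm_num
  have hsplit : Icc (0 : ℝ) 1 = Icc 0 (1 / 2) ∪ Icc (1 / 2) 1 :=
    (Icc_union_Icc_eq_Icc (by norm_num) (by norm_num)).symm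
  refine ⟨?_, ?_, ?_, ?_⟩
  · rw [hsplit]
    exact ((hc₁.comp (by fun_prop) mleft).congr hleft).union_of_isClosed
      ((hc₂.comp (by fun_prop) mright).congr hright) isClosed_Icc isClosed_Icc
  · rw [hsplit]
    rintro t (ht | ht)
    · exact hleft ht ▸ hM₁ (mleft ht)
    · exact hright ht ▸ hM₂ (mright ht)
  · exact (hleft (left_mem_Icc.2 (by norm_num))).trans (by simpa using h0₁)
  · exact (hright (right_mem_Icc.2 (by norm_num))).trans (by norm_num [h1₂])

theorem eVariationOn_comp_affine [PseudoEMetricSpace E] (f : ℝ → E) {c : ℝ} (hc : 0 < c)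
    (e a b : ℝ) :
    eVariationOn (fun t => f (c * t + e)) (Icc a b) =
      eVariationOn f (Icc (c * a + e) (c * b + e)) := by
  have hmono : MonotoneOn (fun t => c * t + e) (Icc a b) := fun s _ t _ hst => by
    dsimp only; gcongr
  rw [← image_affine_Icc' hc]
  exact eVariationOn.comp_eq_of_monotoneOn f _ hmono

theorem eVariationOn_curveConcat [PseudoEMetricSpace E] {γ₁ γ₂ : ℝ → E} (h : γ₁ 1 = γ₂ 0) :
    eVariationOn (curveConcat γ₁ γ₂) (Icc 0 1) =
      eVariationOn γ₁ (Icc 0 1) + eVariationOn γ₂ (Icc 0 1) := by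
  have hsplit := eVariationOn.Icc_add_Icc (curveConcat γ₁ γ₂) (s := univ)
    (by norm_num : (0 : ℝ) ≤ 1 / 2) (by norm_num : (1 / 2 : ℝ) ≤ 1) (mem_univ _)
  simp only [univ_inter] at hsplit
  rw [← hsplit, eVariationOn.eq_of_eqOn (curveConcat_eqOn_left γ₁ γ₂),
    eVariationOn.eq_of_eqOn (curveConcat_eqOn_right h), eVariationOn_comp_affine _ two_pos,
    eVariationOn_comp_affine _ two_pos]
  norm_num

end Curves

section GeodesicDistance

variable {d : ℕ} {M : Set (EuclideanSpace ℝ (Fin d))} {x y z : EuclideanSpace ℝ (Fin d)}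

theorem IsCurveIn.geoDistE_le {γ : ℝ → EuclideanSpace ℝ (Fin d)} (hγ : IsCurveIn M γ x y) :
    geoDistE M x y ≤ eVariationOn γ (Icc 0 1) :=
  iInf₂_le_of_le γ hγ.1 <| iInf₂_le_of_le hγ.2.1 hγ.2.2.1 <| iInf_le_of_le hγ.2.2.2 le_rfl

theorem GeodesicallyConvex.exists_curve (hM : GeodesicallyConvex M) (hx : x ∈ M) (hy : y ∈ M) :
    ∃ γ, IsCurveIn M γ x y ∧ eVariationOn γ (Icc 0 1) = ENNReal.ofReal (geoDist M x y) :=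
  let ⟨γ, hc, hm, h0, h1, hv⟩ := hM x hx y hy
  ⟨γ, ⟨hc, hm, h0, h1⟩, hv⟩

theorem geoDist_nonneg : 0 ≤ geoDist M x y := ENNReal.toReal_nonneg

theorem geoDist_self (hx : x ∈ M) : geoDist M x x = 0 := by
  have hconst : IsCurveIn M (fun _ => x) x x := ⟨continuousOn_const, fun _ _ => hx, rfl, rfl⟩
  have h := hconst.geoDistE_le
  rw [eVariationOn.constant_on (by simp), nonpos_iff_eq_zero] at h
  simp [geoDist, h]

theorem GeodesicallyConvex.geoDist_triangle (hM : GeodesicallyConvex M) (hx : x ∈ M)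
    (hy : y ∈ M) (hz : z ∈ M) : geoDist M x z ≤ geoDist M x y + geoDist M y z := by
  obtain ⟨γ₁, h₁, hv₁⟩ := hM.exists_curve hx hy
  obtain ⟨γ₂, h₂, hv₂⟩ := hM.exists_curve hy hz
  have hle := (h₁.concat h₂).geoDistE_le
  rw [eVariationOn_curveConcat (h₁.2.2.2.trans h₂.2.2.1.symm), hv₁, hv₂,
    ← ENNReal.ofReal_add geoDist_nonneg geoDist_nonneg] at hle
  exact ENNReal.toReal_le_of_le_ofReal (add_nonneg geoDist_nonneg geoDist_nonneg) hle

theorem GeodesicallyConvex.geoDist_le_sum (hM : GeodesicallyConvex M) {p : ℕ}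
    {w : ℕ → EuclideanSpace ℝ (Fin d)} (hw : ∀ i ≤ p, w i ∈ M) :
    geoDist M (w 0) (w p) ≤ ∑ i ∈ Finset.range p, geoDist M (w i) (w (i + 1)) := by
  induction p with
  | zero => simp [geoDist_self (hw 0 le_rfl)]
  | succ q ih =>
    rw [Finset.sum_range_succ]
    have htri := hM.geoDist_triangle (hw 0 (Nat.zero_le _)) (hw q q.le_succ) (hw (q + 1) le_rfl)
    linarith [ih fun i hi => hw i (hi.trans q.le_succ)]

end GeodesicDistance

section GraphPaths

variable {d : ℕ} {V : Set (EuclideanSpace ℝ (Fin d))}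
  {Edge : EuclideanSpace ℝ (Fin d) → EuclideanSpace ℝ (Fin d) → Prop}
  {x y : EuclideanSpace ℝ (Fin d)}

def IsGraphPath {α : Type*} (V : Set α) (Edge : α → α → Prop) (x y : α) (p : ℕ) (w : ℕ → α) :
    Prop :=
  w 0 = x ∧ w p = y ∧ (∀ i ≤ p, w i ∈ V) ∧ ∀ i < p, Edge (w i) (w (i + 1))

theorem graphDistRel_eq_sInf :
    graphDistRel V Edge x y = sInf {L | ∃ p w, IsGraphPath V Edge x y p w ∧
      L = ∑ i ∈ Finset.range p, ‖w (i + 1) - w i‖} := by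
  simp only [graphDistRel, IsGraphPath, and_assoc]

theorem graphDistRel_le {p : ℕ} {w : ℕ → EuclideanSpace ℝ (Fin d)}
    (hw : IsGraphPath V Edge x y p w) :
    graphDistRel V Edge x y ≤ ∑ i ∈ Finset.range p, ‖w (i + 1) - w i‖ := by
  rw [graphDistRel_eq_sInf]
  refine csInf_le ⟨0, ?_⟩ ⟨p, w, hw, rfl⟩
  rintro _ ⟨q, v, -, rfl⟩
  positivity

theorem le_graphDistRel {c : ℝ} (hne : ∃ p w, IsGraphPath V Edge x y p w)
    (h : ∀ p w, IsGraphPath V Edge x y p w → c ≤ ∑ i ∈ Finset.range p, ‖w (i + 1) - w i‖) :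
    c ≤ graphDistRel V Edge x y := by
  obtain ⟨p, w, hw⟩ := hne
  rw [graphDistRel_eq_sInf]
  refine le_csInf ⟨_, p, w, hw, rfl⟩ ?_
  rintro _ ⟨q, v, hv, rfl⟩
  exact h q v hv

end GraphPaths

section LowerBound
open Real

variable {d : ℕ} {M : Set (EuclideanSpace ℝ (Fin d))} {r₀ ε : ℝ}

theorem mul_geoDist_le_norm_sub
    (hreach : ∀ a ∈ M, ∀ b ∈ M, ‖a - b‖ < 2 * r₀ →
      geoDist M a b ≤ 2 * r₀ * arcsin (‖a - b‖ / (2 * r₀)))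
    (hε : ε < 2 * r₀) {u v : EuclideanSpace ℝ (Fin d)} (hu : u ∈ M) (hv : v ∈ M)
    (huv : ‖u - v‖ ≤ ε) :
    (1 - 1 / 24 * (π * ε / (2 * r₀)) ^ 2) * geoDist M u v ≤ ‖u - v‖ := by
  have hr : 0 < 2 * r₀ := (norm_nonneg _).trans_lt (huv.trans_lt hε)
  have hT : ε / (2 * r₀) ≤ 1 := (div_le_one hr).2 hε.le
  have ht : ‖u - v‖ / (2 * r₀) ≤ ε / (2 * r₀) := by gcongr
  have hfac := one_sub_sq_pi_mul_nonneg (div_nonneg ((norm_nonneg _).trans huv) hr.le) hT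
  have harcsin := one_sub_mul_arcsin_le hT (by positivity) ht
  rw [← mul_div_assoc] at hfac harcsin
  calc (1 - 1 / 24 * (π * ε / (2 * r₀)) ^ 2) * geoDist M u v
      ≤ (1 - 1 / 24 * (π * ε / (2 * r₀)) ^ 2) * (2 * r₀ * arcsin (‖u - v‖ / (2 * r₀))) :=
        mul_le_mul_of_nonneg_left (hreach u hu v hv (huv.trans_lt hε)) hfac
    _ = 2 * r₀ * ((1 - 1 / 24 * (π * ε / (2 * r₀)) ^ 2) * arcsin (‖u - v‖ / (2 * r₀))) := by
        ring
    _ ≤ 2 * r₀ * (‖u - v‖ / (2 * r₀)) := by gcongr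
    _ = ‖u - v‖ := mul_div_cancel₀ _ hr.ne'

theorem GeodesicallyConvex.mul_geoDist_le_pathLength (hM : GeodesicallyConvex M)
    (hreach : ∀ a ∈ M, ∀ b ∈ M, ‖a - b‖ < 2 * r₀ →
      geoDist M a b ≤ 2 * r₀ * arcsin (‖a - b‖ / (2 * r₀)))
    (hε₀ : 0 ≤ ε) (hε : ε < 2 * r₀) {V : Set (EuclideanSpace ℝ (Fin d))} (hVM : V ⊆ M)
    {x y : EuclideanSpace ℝ (Fin d)} {p : ℕ} {w : ℕ → EuclideanSpace ℝ (Fin d)}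
    (hw : IsGraphPath V (fun u v => ‖u - v‖ ≤ ε) x y p w) :
    (1 - 1 / 24 * (π * ε / (2 * r₀)) ^ 2) * geoDist M x y ≤
      ∑ i ∈ Finset.range p, ‖w (i + 1) - w i‖ := by
  obtain ⟨rfl, rfl, hwV, hedge⟩ := hw
  have hwM : ∀ i ≤ p, w i ∈ M := fun i hi => hVM (hwV i hi)
  have hr : 0 < 2 * r₀ := hε₀.trans_lt hε
  have hfac := one_sub_sq_pi_mul_nonneg (div_nonneg hε₀ hr.le) ((div_le_one hr).2 hε.le)
  rw [← mul_div_assoc] at hfac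
  calc (1 - 1 / 24 * (π * ε / (2 * r₀)) ^ 2) * geoDist M (w 0) (w p)
      ≤ ∑ i ∈ Finset.range p, (1 - 1 / 24 * (π * ε / (2 * r₀)) ^ 2) *
          geoDist M (w i) (w (i + 1)) := by
        rw [← Finset.mul_sum]
        exact mul_le_mul_of_nonneg_left (hM.geoDist_le_sum hwM) hfac
    _ ≤ ∑ i ∈ Finset.range p, ‖w (i + 1) - w i‖ := by
        refine Finset.sum_le_sum fun i hi => ?_
        have hi := Finset.mem_range.1 hi
        rw [norm_sub_rev]
        exact mul_geoDist_le_norm_sub hreach hε (hwM i hi.le) (hwM (i + 1) hi) (hedge i hi)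

end LowerBound

section Partition

variable {E : Type*} [PseudoMetricSpace E] {γ : ℝ → E}

theorem exists_dist_eq_of_lt_dist {s b η : ℝ} (hsb : s ≤ b) (hγ : ContinuousOn γ (Icc s b))
    (hη : 0 ≤ η) (hηb : η < dist (γ s) (γ b)) : ∃ s' ∈ Icc s b, dist (γ s) (γ s') = η :=
  intermediate_value_Icc hsb (by fun_prop) ⟨by simpa using hη, hηb.le⟩

theorem ofReal_add_eVariationOn_le {s s' b η : ℝ} (hs' : s' ∈ Icc s b)
    (hη : dist (γ s) (γ s') = η) :
    ENNReal.ofReal η + eVariationOn γ (Icc s' b) ≤ eVariationOn γ (Icc s b) := by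
  have hsplit := eVariationOn.Icc_add_Icc γ (s := univ) hs'.1 hs'.2 (mem_univ _)
  simp only [univ_inter] at hsplit
  rw [← hsplit, ← hη, ← edist_dist]
  gcongr
  exact eVariationOn.edist_le γ (left_mem_Icc.2 hs'.1) (right_mem_Icc.2 hs'.1)

/-- Induction on the variation budget `N * η`: either `γ b` is within `η` of `γ s`, or jump to a
point at chord distance exactly `η`, which uses up at least `η` of the variation. -/
theorem exists_partition_dist_le {b η : ℝ} (hη : 0 < η) (N : ℕ) {s : ℝ} (hsb : s ≤ b)
    (hγ : ContinuousOn γ (Icc s b)) (hvar : eVariationOn γ (Icc s b) < ENNReal.ofReal (N * η)) :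
    ∃ p < N, ∃ u : ℕ → ℝ, Monotone u ∧ (∀ i, u i ∈ Icc s b) ∧ u 0 = s ∧ u (p + 1) = b ∧
      ∀ i ≤ p, dist (γ (u i)) (γ (u (i + 1))) ≤ η := by
  induction N generalizing s with
  | zero => simp at hvar
  | succ N ih =>
    by_cases hshort : dist (γ s) (γ b) ≤ η
    · refine ⟨0, N.succ_pos, fun | 0 => s | _ + 1 => b, ?_, ?_, rfl, rfl, ?_⟩
      · exact monotone_nat_of_le_succ fun | 0 => hsb | _ + 1 => le_rfl
      · rintro (_ | _) <;> simp [hsb]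
      · rintro (_ | _) hi
        exacts [hshort, absurd hi (by omega)]
    obtain ⟨s', hs', hss'⟩ := exists_dist_eq_of_lt_dist hsb hγ hη.le (not_le.1 hshort)
    have hvar' : eVariationOn γ (Icc s' b) < ENNReal.ofReal (N * η) := by
      have hle := ofReal_add_eVariationOn_le hs' hss'
      rw [show ((N + 1 : ℕ) : ℝ) * η = η + N * η by push_cast; ring,
        ENNReal.ofReal_add hη.le (by positivity)] at hvar
      exact (ENNReal.add_lt_add_iff_left ENNReal.ofReal_ne_top).1 (hle.trans_lt hvar)
    obtain ⟨p, hpN, u, hu, huI, hu0, hup, hudist⟩ :=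
      ih hs'.2 (hγ.mono (Icc_subset_Icc_left hs'.1)) hvar'
    refine ⟨p + 1, by omega, fun | 0 => s | i + 1 => u i, ?_, ?_, rfl, hup, ?_⟩
    · exact monotone_nat_of_le_succ fun
        | 0 => show s ≤ u 0 from hu0 ▸ hs'.1
        | i + 1 => hu i.le_succ
    · rintro (_ | i)
      exacts [left_mem_Icc.2 hsb, Icc_subset_Icc_left hs'.1 (huI i)]
    · rintro (_ | i) hi
      exacts [show dist (γ s) (γ (u 0)) ≤ η from hu0 ▸ hss'.le, hudist i (by omega)]

theorem sum_dist_le_toReal_eVariationOn {s : Set ℝ} (hfin : eVariationOn γ s ≠ ⊤)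
    {u : ℕ → ℝ} (hu : Monotone u) (hus : ∀ i, u i ∈ s) (n : ℕ) :
    ∑ i ∈ Finset.range n, dist (γ (u (i + 1))) (γ (u i)) ≤ (eVariationOn γ s).toReal := by
  simp_rw [dist_edist]
  rw [← ENNReal.toReal_sum fun _ _ => edist_ne_top _ _]
  exact ENNReal.toReal_mono hfin (eVariationOn.sum_le hu hus)

end Partition

theorem exists_perturb_interior {F : Type*} [SeminormedAddCommGroup F] {S : Set F} {δ : ℝ}
    (hδ : 0 ≤ δ) (p : ℕ) (v : ℕ → F) (hS : ∀ i, ∃ z ∈ S, ‖z - v i‖ ≤ δ) :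
    ∃ w : ℕ → F, w 0 = v 0 ∧ w (p + 1) = v (p + 1) ∧ (∀ i ≤ p + 1, w i ∈ S ∪ {v 0, v (p + 1)}) ∧
      (∀ i, ‖w i - w (i + 1)‖ ≤ ‖v i - v (i + 1)‖ + 2 * δ) ∧
      ∑ i ∈ Finset.range (p + 1), ‖w (i + 1) - w i‖ ≤
        ∑ i ∈ Finset.range (p + 1), ‖v (i + 1) - v i‖ + 2 * δ * p := by
  choose z hzS hz using hS
  classical
  set w : ℕ → F := fun i => if i = 0 ∨ p < i then v i else z i with hw_def
  have hw0 : w 0 = v 0 := if_pos (Or.inl rfl)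
  have hwp : w (p + 1) = v (p + 1) := if_pos (Or.inr p.lt_succ_self)
  have herr : ∀ i, ‖w i - v i‖ ≤ δ := fun i => by
    by_cases h : i = 0 ∨ p < i <;> simp [hw_def, h, hδ, hz]
  have hedge : ∀ i, ‖w (i + 1) - w i‖ ≤ ‖v (i + 1) - v i‖ + ‖w i - v i‖ + ‖w (i + 1) - v (i + 1)‖ :=
    fun i => by
      have := norm_sub_le_norm_sub_add_norm_sub (w (i + 1)) (v (i + 1)) (w i)
      have := norm_sub_le_norm_sub_add_norm_sub (v (i + 1)) (v i) (w i)
      rw [norm_sub_rev (v i) (w i)] at *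
      linarith
  have hinterior : ∑ i ∈ Finset.range p, ‖w (i + 1) - v (i + 1)‖ ≤ p * δ := by
    simpa using Finset.sum_le_sum fun i (_ : i ∈ Finset.range p) => herr (i + 1)
  refine ⟨w, hw0, hwp, fun i hi => ?_, fun i => ?_, ?_⟩
  · by_cases h : i = 0 ∨ p < i
    · obtain rfl | rfl : i = 0 ∨ i = p + 1 := by omega
      exacts [hw0 ▸ by simp, hwp ▸ by simp]
    · simp [hw_def, h, hzS]
  · rw [norm_sub_rev, norm_sub_rev (v i)]
    linarith [hedge i, herr i, herr (i + 1)]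
  · calc ∑ i ∈ Finset.range (p + 1), ‖w (i + 1) - w i‖
        ≤ ∑ i ∈ Finset.range (p + 1),
            (‖v (i + 1) - v i‖ + ‖w i - v i‖ + ‖w (i + 1) - v (i + 1)‖) :=
          Finset.sum_le_sum fun i _ => hedge i
      _ = ∑ i ∈ Finset.range (p + 1), ‖v (i + 1) - v i‖ +
            2 * ∑ i ∈ Finset.range p, ‖w (i + 1) - v (i + 1)‖ := by
          rw [Finset.sum_add_distrib, Finset.sum_add_distrib,
            Finset.sum_range_succ' (fun i => ‖w i - v i‖),
            Finset.sum_range_succ (fun i => ‖w (i + 1) - v (i + 1)‖), hw0, hwp]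
          simp only [sub_self, norm_zero]
          ring
      _ ≤ _ := by linarith

theorem exists_norm_sub_le_hausdorffDist {E : Type*} [SeminormedAddCommGroup E] {S M : Set E}
    (hS : IsCompact S) (hSne : S.Nonempty) (hM : Bornology.IsBounded M) {a : E} (ha : a ∈ M) :
    ∃ z ∈ S, ‖z - a‖ ≤ hausdorffDist S M := by
  obtain ⟨z, hz, hdist⟩ := hS.exists_infDist_eq_dist hSne a
  refine ⟨z, hz, ?_⟩
  rw [← dist_eq_norm, dist_comm, ← hdist, hausdorffDist_comm]
  exact infDist_le_hausdorffDist_of_mem ha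
    (hausdorffEDist_ne_top_of_nonempty_of_bounded ⟨a, ha⟩ hSne hM hS.isBounded)

section UpperBound

variable {d : ℕ} {M : Set (EuclideanSpace ℝ (Fin d))} {x y : EuclideanSpace ℝ (Fin d)}

theorem GeodesicallyConvex.exists_chain (hM : GeodesicallyConvex M) (hx : x ∈ M) (hy : y ∈ M)
    {η : ℝ} (hη : 0 < η) :
    ∃ (p : ℕ) (v : ℕ → EuclideanSpace ℝ (Fin d)), v 0 = x ∧ v (p + 1) = y ∧ (∀ i, v i ∈ M) ∧
      (∀ i ≤ p, ‖v i - v (i + 1)‖ ≤ η) ∧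
      ∑ i ∈ Finset.range (p + 1), ‖v (i + 1) - v i‖ ≤ geoDist M x y ∧ p * η ≤ geoDist M x y := by
  obtain ⟨γ, ⟨hγc, hγM, hγ0, hγ1⟩, hγvar⟩ := hM.exists_curve hx hy
  set ℓ := geoDist M x y
  have hlt : ℓ < (⌊ℓ / η⌋₊ + 1 : ℕ) * η := by
    rw [← div_lt_iff₀ hη]; push_cast; exact Nat.lt_floor_add_one _
  obtain ⟨p, hpN, u, hu, huI, hu0, hup, hudist⟩ := exists_partition_dist_le hη _ zero_le_one hγc
    (hγvar ▸ (ENNReal.ofReal_lt_ofReal_iff (by positivity)).2 hlt)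
  have hvar : (eVariationOn γ (Icc 0 1)).toReal = ℓ := by
    rw [hγvar, ENNReal.toReal_ofReal geoDist_nonneg]
  refine ⟨p, γ ∘ u, by simp [hu0, hγ0], by simp [hup, hγ1], fun i => hγM (huI i),
    fun i hi => ?_, ?_, ?_⟩
  · rw [← dist_eq_norm]; exact hudist i hi
  · simp_rw [← dist_eq_norm, ← hvar]
    exact sum_dist_le_toReal_eVariationOn (hγvar ▸ ENNReal.ofReal_ne_top) hu huI _
  · rw [← le_div_iff₀ hη]
    exact (Nat.le_floor_iff (div_nonneg geoDist_nonneg hη.le)).1 (Nat.lt_succ_iff.1 hpN)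

theorem add_two_mul_le_one_add_four_mul_div {ℓ δ ε : ℝ} {p : ℕ} (hε : 0 < ε) (hδ : 0 ≤ δ)
    (hδε : 4 * δ ≤ ε) (hp : p * (ε - 2 * δ) ≤ ℓ) :
    ℓ + 2 * δ * p ≤ (1 + 4 * (δ / ε)) * ℓ := by
  have hpε : p * ε ≤ 2 * ℓ := by nlinarith [(Nat.cast_nonneg p : (0 : ℝ) ≤ p)]
  have hδε' : 0 ≤ δ / ε := div_nonneg hδ hε.le
  calc ℓ + 2 * δ * p = ℓ + 2 * (δ / ε) * (p * ε) := by field_simp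
    _ ≤ ℓ + 2 * (δ / ε) * (2 * ℓ) := by gcongr
    _ = (1 + 4 * (δ / ε)) * ℓ := by ring

theorem GeodesicallyConvex.exists_graphPath_length_le (hM : GeodesicallyConvex M) (hx : x ∈ M)
    (hy : y ∈ M) {S : Set (EuclideanSpace ℝ (Fin d))} {δ ε : ℝ} (hε : 0 < ε) (hδ : 0 ≤ δ)
    (hδε : 4 * δ ≤ ε) (hS : ∀ a ∈ M, ∃ z ∈ S, ‖z - a‖ ≤ δ) :
    ∃ p w, IsGraphPath (S ∪ {x, y}) (fun u v => ‖u - v‖ ≤ ε) x y p w ∧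
      ∑ i ∈ Finset.range p, ‖w (i + 1) - w i‖ ≤ (1 + 4 * (δ / ε)) * geoDist M x y := by
  obtain ⟨p, v, rfl, rfl, hvM, hchord, hsum, hcount⟩ :=
    hM.exists_chain hx hy (η := ε - 2 * δ) (by linarith)
  obtain ⟨w, hw0, hwp, hwS, hedge, hlen⟩ := exists_perturb_interior hδ p v fun i => hS _ (hvM i)
  refine ⟨p + 1, w, ⟨hw0, hwp, hwS, fun i hi => ?_⟩, ?_⟩
  · linarith [hedge i, hchord i (Nat.lt_succ_iff.1 hi)]
  · linarith [add_two_mul_le_one_add_four_mul_div hε hδ hδε hcount]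

end UpperBound

/-- Theorem 1 of the paper: the ε-neighborhood graph distance approximates the
geodesic distance, for a compact geodesically convex set with positive reach. -/
theorem graph_approx_theorem {d : ℕ} (M : Set (EuclideanSpace ℝ (Fin d)))
    (hMcomp : IsCompact M) (hMgeo : GeodesicallyConvex M)
    (r₀ : ℝ) (hr₀ : 0 < r₀)
    (hreach : ∀ a ∈ M, ∀ b ∈ M, ‖a - b‖ < 2 * r₀ →
      geoDist M a b ≤ 2 * r₀ * Real.arcsin (‖a - b‖ / (2 * r₀)))
    (Xn : ℕ → Set (EuclideanSpace ℝ (Fin d)))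
    (hXnM : ∀ n, Xn n ⊆ M) (hXnfin : ∀ n, (Xn n).Finite)
    (hXnne : ∀ n, (Xn n).Nonempty)
    (ε : ℕ → ℝ) (hεpos : ∀ n, 0 < ε n)
    (hε0 : Tendsto ε atTop (nhds 0))
    (hτ0 : Tendsto (fun n => Metric.hausdorffDist (Xn n) M / ε n) atTop (nhds 0)) :
    ∀ᶠ n in atTop, ε n < 2 * r₀ ∧ ∀ x ∈ M, ∀ y ∈ M,
      (1 - (1 / 24) * (Real.pi * ε n / (2 * r₀)) ^ 2) * geoDist M x y ≤
          graphDist (Xn n ∪ {x, y}) (ε n) x y ∧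
        graphDist (Xn n ∪ {x, y}) (ε n) x y ≤
          (1 + 4 * (Metric.hausdorffDist (Xn n) M / ε n)) * geoDist M x y := by
  filter_upwards [hε0.eventually_lt_const (by linarith : (0 : ℝ) < 2 * r₀),
    hτ0.eventually_lt_const (by norm_num : (0 : ℝ) < 1 / 4)] with n hεr hτ
  have hδε : 4 * hausdorffDist (Xn n) M ≤ ε n := by
    rw [div_lt_iff₀ (hεpos n)] at hτ; linarith
  refine ⟨hεr, fun x hx y hy => ?_⟩
  obtain ⟨p, w, hw, hlen⟩ := hMgeo.exists_graphPath_length_le hx hy (hεpos n)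
    hausdorffDist_nonneg hδε fun a ha =>
      exists_norm_sub_le_hausdorffDist (hXnfin n).isCompact (hXnne n) hMcomp.isBounded ha
  have hVM : Xn n ∪ {x, y} ⊆ M :=
    union_subset (hXnM n) (insert_subset hx (singleton_subset_iff.2 hy))
  exact ⟨le_graphDistRel ⟨p, w, hw⟩ fun q v hv =>
      hMgeo.mul_geoDist_le_pathLength hreach (hεpos n).le hεr hVM hv,
    (graphDistRel_le hw).trans hlen⟩
end

section
/- Let $X_1, X_2, \ldots$ be iid observations from a distribution $P_X$ on $\mathbb{R}^d$ whose support $M$ is compact and standard with respect to $P_X$ with standardness constant $\eta$. Then with probability one, for $n$ large enough, $d_H(\{X_1,\ldots,X_n\}, M) \le c (\log n / n)^{1/d}$ for any constant $c > (2/(\eta \omega_d))^{1/d}$, where $\omega_d$ is the volume of the unit ball in $\mathbb{R}^d$. -/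
/-!
Write `ℓₙ = (log n / n)^(1/d)` and pick `(2 / (η ω_d))^(1/d) < c' < c`. Take a maximal
`(c - c') ℓₙ`-separated subset of `M`: it is a `(c - c') ℓₙ`-net, and since the balls of radius
`(c - c') ℓₙ / 2` around its points are disjoint and each has mass `≳ log n / n` by standardness,
it has `O(n / log n)` points. Each ball of radius `c' ℓₙ` around a net point has mass at least
`κ log n / n` with `κ = η ω_d c'^d > 2`, so the probability that one of them misses `X₀, …, Xₙ₋₁`
is `O(n^(1-κ) / log n)`, which is summable. By Borel–Cantelli, almost surely every net point
eventually lies within `c' ℓₙ` of the sample, whence `d_H ≤ (c - c') ℓₙ + c' ℓₙ = c ℓₙ`.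
-/

open MeasureTheory ProbabilityTheory Filter Metric Topology
open scoped ENNReal NNReal

theorem ENNReal.one_sub_pow_le_ofReal_exp {p : ℝ≥0∞} {w : ℝ} (hp : p ≤ 1)
    (hw : ENNReal.ofReal w ≤ p) (n : ℕ) :
    (1 - p) ^ n ≤ ENNReal.ofReal (Real.exp (-(n * w))) := by
  have hp_top : p ≠ ⊤ := ne_top_of_le_ne_top one_ne_top hp
  have hw' : w ≤ p.toReal := (ENNReal.ofReal_le_iff_le_toReal hp_top).1 hw
  have hstep : 1 - p ≤ ENNReal.ofReal (Real.exp (-w)) := by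
    rw [ENNReal.le_ofReal_iff_toReal_le (by finiteness) (Real.exp_pos _).le,
      ENNReal.toReal_sub_of_le hp one_ne_top, ENNReal.toReal_one]
    linarith [Real.add_one_le_exp (-w)]
  calc (1 - p) ^ n ≤ ENNReal.ofReal (Real.exp (-w)) ^ n := pow_le_pow_left' hstep n
    _ = ENNReal.ofReal (Real.exp (-(n * w))) := by
      rw [← ENNReal.ofReal_pow (Real.exp_pos _).le, ← Real.exp_nat_mul, mul_neg]

namespace ProbabilityTheory

variable {Ω α : Type*} [MeasurableSpace Ω] [MeasurableSpace α] {P : Measure Ω} {μ : Measure α}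
  [IsProbabilityMeasure μ] {X : ℕ → Ω → α}

theorem iIndepFun.measure_iInter_range_preimage_compl (hX : iIndepFun X P)
    (hmeas : ∀ i, Measurable (X i)) (hid : ∀ i, P.map (X i) = μ) {A : Set α}
    (hA : MeasurableSet A) (n : ℕ) :
    P (⋂ i ∈ Finset.range n, X i ⁻¹' Aᶜ) = (1 - μ A) ^ n := by
  rw [hX.measure_inter_preimage_eq_mul _ fun _ _ => hA.compl]
  have hmiss : ∀ i, P (X i ⁻¹' Aᶜ) = 1 - μ A := fun i => by
    rw [← Measure.map_apply (hmeas i) hA.compl, hid i, prob_compl_eq_one_sub hA]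
  simp only [hmiss, Finset.prod_const, Finset.card_range]

theorem iIndepFun.measure_iUnion_iInter_range_preimage_compl_le (hX : iIndepFun X P)
    (hmeas : ∀ i, Measurable (X i)) (hid : ∀ i, P.map (X i) = μ) {ι : Type*} (t : Finset ι)
    {A : ι → Set α} (hA : ∀ j ∈ t, MeasurableSet (A j)) {w : ℝ}
    (hw : ∀ j ∈ t, ENNReal.ofReal w ≤ μ (A j)) (n : ℕ) :
    P (⋃ j ∈ t, ⋂ i ∈ Finset.range n, X i ⁻¹' (A j)ᶜ) ≤
      ENNReal.ofReal (t.card * Real.exp (-(n * w))) := by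
  calc P (⋃ j ∈ t, ⋂ i ∈ Finset.range n, X i ⁻¹' (A j)ᶜ)
      ≤ ∑ j ∈ t, P (⋂ i ∈ Finset.range n, X i ⁻¹' (A j)ᶜ) := measure_biUnion_finset_le _ _
    _ ≤ ∑ _j ∈ t, ENNReal.ofReal (Real.exp (-(n * w))) := Finset.sum_le_sum fun j hj => by
      rw [hX.measure_iInter_range_preimage_compl hmeas hid (hA j hj)]
      exact ENNReal.one_sub_pow_le_ofReal_exp prob_le_one (hw j hj) n
    _ = ENNReal.ofReal (t.card * Real.exp (-(n * w))) := by
      rw [Finset.sum_const, nsmul_eq_mul, ENNReal.ofReal_mul (Nat.cast_nonneg _),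
        ENNReal.ofReal_natCast]

end ProbabilityTheory

theorem ae_eventually_notMem_of_summable {α : Type*} [MeasurableSpace α] {μ : Measure α}
    [IsFiniteMeasure μ] {s : ℕ → Set α} {b : ℕ → ℝ} (hb : Summable b)
    (hs : ∀ᶠ n in atTop, μ.real (s n) ≤ b n) : ∀ᵐ x ∂μ, ∀ᶠ n in atTop, x ∉ s n := by
  have hsum : Summable fun n => μ.real (s n) :=
    hb.of_norm_bounded_eventually_nat <| hs.mono fun n hn => by
      rwa [Real.norm_of_nonneg measureReal_nonneg]
  refine ae_eventually_notMem ?_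
  have hreal : ∀ n, μ (s n) = ENNReal.ofReal (μ.real (s n)) := fun _ => (ofReal_measureReal).symm
  simp_rw [hreal]
  rw [← ENNReal.ofReal_tsum_of_nonneg (fun _ => measureReal_nonneg) hsum]
  exact ENNReal.ofReal_ne_top

theorem hausdorffDist_le_add_of_forall_dist_le {X : Type*} [PseudoMetricSpace X]
    {S A t : Set X} {δ r : ℝ} (hδ : 0 ≤ δ) (hr : 0 ≤ r) (hSA : S ⊆ A)
    (hA : ∀ x ∈ A, ∃ y ∈ t, dist x y ≤ δ) (ht : ∀ y ∈ t, ∃ z ∈ S, dist y z ≤ r) :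
    hausdorffDist S A ≤ δ + r := by
  refine hausdorffDist_le_of_mem_dist (add_nonneg hδ hr) (fun z hz => ⟨z, hSA hz, ?_⟩) ?_
  · simpa using add_nonneg hδ hr
  · intro x hx
    obtain ⟨y, hyt, hxy⟩ := hA x hx
    obtain ⟨z, hzS, hyz⟩ := ht y hyt
    exact ⟨z, hzS, (dist_triangle x y z).trans (add_le_add hxy hyz)⟩

theorem exists_finset_subset_forall_dist_le_card_mul_le {X : Type*} [PseudoMetricSpace X]
    [MeasurableSpace X] [OpensMeasurableSpace X] (μ : Measure X) {A : Set X} (hA : IsCompact A)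
    {δ : ℝ} (hδ : 0 < δ) {q : ℝ≥0∞} (hq : ∀ y ∈ A, q ≤ μ (closedBall y (δ / 2))) :
    ∃ t : Finset X, ↑t ⊆ A ∧ (∀ x ∈ A, ∃ y ∈ t, dist x y ≤ δ) ∧ t.card * q ≤ μ Set.univ := by
  classical
  set ε : ℝ≥0 := δ.toNNReal
  have hε : (ε : ℝ) = δ := Real.coe_toNNReal δ hδ.le
  have hpack : packingNumber ε A ≠ ⊤ := by
    obtain ⟨N, -, hNfin, hN⟩ :=
      exists_finite_isCover_of_isCompact (ε := ε / 2) (by simp [ε, hδ]) hA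
    have hle := (packingNumber_two_mul_le_externalCoveringNumber (ε / 2) A).trans
      hN.externalCoveringNumber_le_encard
    rw [mul_div_cancel₀ ε two_ne_zero] at hle
    exact ne_top_of_le_ne_top hNfin.encard_lt_top.ne hle
  set C := maximalSeparatedSet ε A
  have hCfin : C.Finite := Set.encard_ne_top_iff.1 (by rwa [encard_maximalSeparatedSet hpack])
  refine ⟨hCfin.toFinset, by simpa using maximalSeparatedSet_subset, fun x hx => ?_, ?_⟩
  · have hxy := (isCover_maximalSeparatedSet hpack).subset_iUnion_closedBall hx
    simp only [Set.mem_iUnion, mem_closedBall, hε] at hxy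
    obtain ⟨y, hy, hxy⟩ := hxy
    exact ⟨y, hCfin.mem_toFinset.2 hy, hxy⟩
  · have hdisj : C.PairwiseDisjoint fun y => closedBall y (δ / 2) := by
      intro y hy z hz hyz
      have hsep : δ < dist y z := by
        have : ENNReal.ofReal δ < edist y z := isSeparated_maximalSeparatedSet hy hz hyz
        rwa [edist_dist, ENNReal.ofReal_lt_ofReal_iff_of_nonneg hδ.le] at this
      exact closedBall_disjoint_closedBall (by linarith)
    calc (hCfin.toFinset.card : ℝ≥0∞) * q
        ≤ ∑ y ∈ hCfin.toFinset, μ (closedBall y (δ / 2)) := by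
          rw [← nsmul_eq_mul]
          exact Finset.card_nsmul_le_sum _ _ _ fun y hy =>
            hq y (maximalSeparatedSet_subset (hCfin.mem_toFinset.1 hy))
      _ = μ (⋃ y ∈ hCfin.toFinset, closedBall y (δ / 2)) :=
          (measure_biUnion_finset (by simpa using hdisj) fun _ _ => measurableSet_closedBall).symm
      _ ≤ μ Set.univ := measure_mono (Set.subset_univ _)

theorem ae_eventually_forall_exists_mem {Ω α ι : Type*} [MeasurableSpace Ω] [MeasurableSpace α]
    {P : Measure Ω} [IsFiniteMeasure P] {μ : Measure α} [IsProbabilityMeasure μ]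
    {X : ℕ → Ω → α} (hX : iIndepFun X P) (hmeas : ∀ i, Measurable (X i))
    (hid : ∀ i, P.map (X i) = μ) (t : ℕ → Finset ι) {A : ℕ → ι → Set α}
    (hA : ∀ n j, MeasurableSet (A n j)) {w : ℕ → ℝ}
    (hw : ∀ᶠ n in atTop, ∀ j ∈ t n, ENNReal.ofReal (w n) ≤ μ (A n j))
    (hsum : Summable fun n : ℕ => (t n).card * Real.exp (-(n * w n))) :
    ∀ᵐ ω ∂P, ∀ᶠ n in atTop, ∀ j ∈ t n, ∃ i < n, X i ω ∈ A n j := by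
  have hmiss := ae_eventually_notMem_of_summable
    (s := fun n => ⋃ j ∈ t n, ⋂ i ∈ Finset.range n, X i ⁻¹' (A n j)ᶜ) hsum <|
      hw.mono fun n hn => ENNReal.toReal_le_of_le_ofReal (by positivity) <|
        hX.measure_iUnion_iInter_range_preimage_compl_le hmeas hid (t n) (fun j _ => hA n j) hn n
  filter_upwards [hmiss] with ω hω
  filter_upwards [hω] with n hn j hj
  by_contra! hout
  exact hn (Set.mem_biUnion hj (Set.mem_iInter₂.2 fun i hi => hout i (Finset.mem_range.1 hi)))

theorem ae_eventually_hausdorffDist_sample_le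
    {Ω E : Type*} [MeasurableSpace Ω] {P : Measure Ω} [IsFiniteMeasure P]
    [PseudoMetricSpace E] [MeasurableSpace E] [OpensMeasurableSpace E]
    {μ : Measure E} [IsProbabilityMeasure μ] {X : ℕ → Ω → E}
    (hX : iIndepFun X P) (hmeas : ∀ i, Measurable (X i)) (hid : ∀ i, P.map (X i) = μ)
    {M : Set E} (hM : IsCompact M) (hXM : ∀ i, ∀ᵐ ω ∂P, X i ω ∈ M)
    {δ r q w : ℕ → ℝ} (hδ : ∀ᶠ n in atTop, 0 < δ n) (hr : ∀ᶠ n in atTop, 0 ≤ r n)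
    (hq : ∀ᶠ n in atTop, 0 < q n ∧ ∀ y ∈ M, ENNReal.ofReal (q n) ≤ μ (closedBall y (δ n / 2)))
    (hw : ∀ᶠ n in atTop, ∀ y ∈ M, ENNReal.ofReal (w n) ≤ μ (closedBall y (r n)))
    (hsum : Summable fun n : ℕ => Real.exp (-(n * w n)) / q n) :
    ∀ᵐ ω ∂P, ∀ᶠ n in atTop, hausdorffDist ((fun i => X i ω) '' {i | i < n}) M ≤ δ n + r n := by
  obtain ⟨N, hN⟩ := eventually_atTop.1 (hδ.and (hq.and hw))
  have hnet : ∀ n, ∃ t : Finset E, N ≤ n → ↑t ⊆ M ∧ (∀ x ∈ M, ∃ y ∈ t, dist x y ≤ δ n) ∧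
      (t.card : ℝ) * q n ≤ 1 := by
    intro n
    by_cases hn : N ≤ n
    · obtain ⟨hδn, ⟨-, hqM⟩, -⟩ := hN n hn
      obtain ⟨t, htM, htδ, hcard⟩ := exists_finset_subset_forall_dist_le_card_mul_le μ hM hδn hqM
      refine ⟨t, fun _ => ⟨htM, htδ, ?_⟩⟩
      rwa [measure_univ, ← ENNReal.ofReal_natCast, ← ENNReal.ofReal_mul (Nat.cast_nonneg _),
        ENNReal.ofReal_le_one] at hcard
    · exact ⟨∅, fun h => absurd h hn⟩
  choose t ht using hnet
  have hsum' : Summable fun n : ℕ => (t n).card * Real.exp (-(n * w n)) := by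
    refine hsum.of_norm_bounded_eventually_nat ?_
    filter_upwards [eventually_ge_atTop N] with n hn
    rw [Real.norm_of_nonneg (by positivity), le_div_iff₀ (hN n hn).2.1.1]
    nlinarith [(ht n hn).2.2, Real.exp_pos (-(n * w n))]
  have hw' : ∀ᶠ n in atTop, ∀ y ∈ t n, ENNReal.ofReal (w n) ≤ μ (closedBall y (r n)) :=
    (eventually_ge_atTop N).mono fun n hn y hy => (hN n hn).2.2 y ((ht n hn).1 hy)
  filter_upwards [ae_eventually_forall_exists_mem hX hmeas hid t
    (fun _ _ => measurableSet_closedBall) hw' hsum', ae_all_iff.2 hXM] with ω hhit hωM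
  filter_upwards [hhit, eventually_ge_atTop N, hr] with n hhit hn hrn
  refine hausdorffDist_le_add_of_forall_dist_le (hN n hn).1.le hrn ?_ (ht n hn).2.1
    fun y hy => ?_
  · rintro _ ⟨i, -, rfl⟩
    exact hωM i
  · obtain ⟨i, hi, hiy⟩ := hhit y hy
    exact ⟨X i ω, ⟨i, hi, rfl⟩, by rwa [dist_comm]⟩

theorem summable_exp_neg_mul_log_div_self {κ K : ℝ} (hκ : 2 < κ) (hK : 0 < K) :
    Summable fun n : ℕ => Real.exp (-(n * (κ * (Real.log n / n)))) / (K * (Real.log n / n)) := by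
  refine (((Real.summable_nat_rpow (p := 1 - κ)).2 (by linarith)).div_const K)
    |>.of_norm_bounded_eventually_nat ?_
  filter_upwards [eventually_ge_atTop 3] with n hn
  have hn0 : (0 : ℝ) < n := by positivity
  have hlog : 1 ≤ Real.log n := by
    rw [Real.le_log_iff_exp_le hn0]
    exact (Real.exp_one_lt_d9.trans (by norm_num : (2.7182818286 : ℝ) < 3)).le.trans
      (by exact_mod_cast hn)
  have hexp : Real.exp (-(n * (κ * (Real.log n / n)))) = (n : ℝ) ^ (-κ) := by
    rw [Real.rpow_def_of_pos hn0]
    congr 1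
    field_simp
  rw [Real.norm_of_nonneg (by positivity), hexp, div_le_div_iff₀ (by positivity) hK,
    Real.rpow_sub hn0, Real.rpow_one, Real.rpow_neg hn0.le]
  have hpow : 0 < (n : ℝ) ^ κ := Real.rpow_pos_of_pos hn0 κ
  calc ((n : ℝ) ^ κ)⁻¹ * K ≤ ((n : ℝ) ^ κ)⁻¹ * K * Real.log n :=
        le_mul_of_one_le_right (by positivity) hlog
    _ = n / n ^ κ * (K * (Real.log n / n)) := by field_simp

noncomputable def logRate (d n : ℕ) : ℝ := (Real.log n / n) ^ (1 / (d : ℝ))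

theorem tendsto_logRate {d : ℕ} (hd : d ≠ 0) : Tendsto (logRate d) atTop (𝓝 0) := by
  have hlog : Tendsto (fun n : ℕ => Real.log n / n) atTop (𝓝 0) :=
    Real.isLittleO_log_id_atTop.tendsto_div_nhds_zero.comp tendsto_natCast_atTop_atTop
  have hp : (0 : ℝ) < 1 / d := by positivity
  have := (Real.continuousAt_rpow_const 0 _ (Or.inr hp.le)).tendsto.comp hlog
  rwa [Real.zero_rpow hp.ne'] at this

theorem eventually_logRate_pos (d : ℕ) : ∀ᶠ n in atTop, 0 < logRate d n := by
  filter_upwards [eventually_ge_atTop 2] with n hn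
  have hn1 : (1 : ℝ) < n := by exact_mod_cast hn
  exact Real.rpow_pos_of_pos (div_pos (Real.log_pos hn1) (by linarith)) _

theorem mul_logRate_pow {d : ℕ} (hd : d ≠ 0) (a : ℝ) (n : ℕ) :
    (a * logRate d n) ^ d = a ^ d * (Real.log n / n) := by
  rw [mul_pow, logRate, one_div, Real.rpow_inv_natCast_pow (by positivity) hd]

def IsStandard {E : Type*} [PseudoMetricSpace E] [MeasureSpace E] (μ : Measure E) (M : Set E)
    (η lam : ℝ) : Prop :=
  ∀ x ∈ M, ∀ ε : ℝ, 0 < ε → ε ≤ lam →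
    ENNReal.ofReal η * volume (closedBall x ε) ≤ μ (closedBall x ε ∩ M)

namespace IsStandard

variable {E : Type*} [NormedAddCommGroup E] [NormedSpace ℝ E] [MeasureSpace E] [BorelSpace E]
  [FiniteDimensional ℝ E] [(volume : Measure E).IsAddHaarMeasure] {μ : Measure E} {M : Set E}
  {η lam : ℝ}

theorem ofReal_le_measure_closedBall (h : IsStandard μ M η lam) (hη : 0 ≤ η) {x : E}
    (hx : x ∈ M) {ε : ℝ} (hε : 0 < ε) (hεlam : ε ≤ lam) :
    ENNReal.ofReal (η * (volume (ball (0 : E) 1)).toReal * ε ^ Module.finrank ℝ E) ≤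
      μ (closedBall x ε) :=
  calc ENNReal.ofReal (η * (volume (ball (0 : E) 1)).toReal * ε ^ Module.finrank ℝ E)
      = ENNReal.ofReal η * volume (closedBall x ε) := by
        rw [Measure.addHaar_closedBall volume x hε.le, ENNReal.ofReal_mul (by positivity),
          ENNReal.ofReal_mul hη, ENNReal.ofReal_toReal measure_ball_lt_top.ne, mul_assoc,
          mul_comm (volume _)]
    _ ≤ μ (closedBall x ε ∩ M) := h x hx ε hε hεlam
    _ ≤ μ (closedBall x ε) := measure_mono Set.inter_subset_left

theorem eventually_ofReal_le_measure_closedBall (h : IsStandard μ M η lam) (hη : 0 ≤ η)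
    (hlam : 0 < lam) {d : ℕ} (hd : d ≠ 0) {a : ℝ} (ha : 0 < a) :
    ∀ᶠ n in atTop, ∀ y ∈ M, ENNReal.ofReal (η * (volume (ball (0 : E) 1)).toReal *
      (a * logRate d n) ^ Module.finrank ℝ E) ≤ μ (closedBall y (a * logRate d n)) := by
  have hρ : Tendsto (fun n => a * logRate d n) atTop (𝓝 0) := by
    simpa using (tendsto_logRate hd).const_mul a
  filter_upwards [eventually_logRate_pos d, hρ.eventually_le_const hlam] with n hpos hle y hy
  exact h.ofReal_le_measure_closedBall hη hy (mul_pos ha hpos) hle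

theorem ae_eventually_hausdorffDist_le [IsProbabilityMeasure μ] (h : IsStandard μ M η lam)
    {Ω : Type*} [MeasurableSpace Ω] {P : Measure Ω} [IsFiniteMeasure P] {X : ℕ → Ω → E}
    (hX : iIndepFun X P) (hmeas : ∀ i, Measurable (X i)) (hid : ∀ i, P.map (X i) = μ)
    (hM : IsCompact M) (hXM : ∀ i, ∀ᵐ ω ∂P, X i ω ∈ M) (hE : Module.finrank ℝ E ≠ 0)
    (hη : 0 < η) (hlam : 0 < lam) {a b : ℝ} (ha : 0 < a) (hb : 0 < b)
    (hκ : 2 < η * (volume (ball (0 : E) 1)).toReal * b ^ Module.finrank ℝ E) :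
    ∀ᵐ ω ∂P, ∀ᶠ n in atTop, hausdorffDist ((fun i => X i ω) '' {i | i < n}) M ≤
      (a + b) * logRate (Module.finrank ℝ E) n := by
  set d := Module.finrank ℝ E
  set v := (volume (ball (0 : E) 1)).toReal
  have hv : 0 < v := ENNReal.toReal_pos (measure_ball_pos _ _ one_pos).ne' measure_ball_lt_top.ne
  have hsum : Summable fun n : ℕ => Real.exp (-(n * (η * v * (b * logRate d n) ^ d))) /
      (η * v * (a * logRate d n / 2) ^ d) := by
    refine (summable_exp_neg_mul_log_div_self hκ (K := η * v * (a / 2) ^ d) (by positivity)).congr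
      fun n => ?_
    rw [mul_div_right_comm, mul_logRate_pow hE, mul_logRate_pow hE]
    ring_nf
  have key := ae_eventually_hausdorffDist_sample_le hX hmeas hid hM hXM
    (δ := fun n => a * logRate d n) (r := fun n => b * logRate d n)
    ((eventually_logRate_pos d).mono fun n hn => by positivity)
    ((eventually_logRate_pos d).mono fun n hn => by positivity)
    (((eventually_logRate_pos d).and
      (h.eventually_ofReal_le_measure_closedBall hη.le hlam hE (half_pos ha))).mono
        fun n ⟨hn, hq⟩ => ⟨by positivity, by simpa only [mul_div_right_comm] using hq⟩)
    (h.eventually_ofReal_le_measure_closedBall hη.le hlam hE hb) hsum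
  filter_upwards [key] with ω hω
  filter_upwards [hω] with n hn
  linarith

end IsStandard

theorem hausdorff_rate_general {d : ℕ} (hd : 0 < d)
    {Ω : Type*} [MeasureSpace Ω] [IsProbabilityMeasure (ℙ : Measure Ω)]
    (X : ℕ → Ω → EuclideanSpace ℝ (Fin d)) (hmeas : ∀ i, Measurable (X i))
    (hindep : ProbabilityTheory.iIndepFun X ℙ)
    (μ : Measure (EuclideanSpace ℝ (Fin d))) [IsProbabilityMeasure μ]
    (hid : ∀ i, Measure.map (X i) ℙ = μ)
    (M : Set (EuclideanSpace ℝ (Fin d))) (hMcomp : IsCompact M)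
    (hXM : ∀ i, ∀ᵐ ω, X i ω ∈ M)
    (η lam : ℝ) (hη : 0 < η) (hlam : 0 < lam)
    (hstd : ∀ x ∈ M, ∀ ε : ℝ, 0 < ε → ε ≤ lam →
      ENNReal.ofReal η * volume (Metric.closedBall x ε) ≤
        μ (Metric.closedBall x ε ∩ M))
    (c : ℝ)
    (hc : (2 / (η * (volume (Metric.ball (0 : EuclideanSpace ℝ (Fin d)) 1)).toReal))
        ^ (1 / (d : ℝ)) < c) :
    ∀ᵐ ω, ∀ᶠ n : ℕ in atTop,
      Metric.hausdorffDist ((fun i => X i ω) '' {i | i < n}) M ≤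
        c * (Real.log n / n) ^ (1 / (d : ℝ)) := by
  set v := (volume (ball (0 : EuclideanSpace ℝ (Fin d)) 1)).toReal
  have hv : 0 < v := ENNReal.toReal_pos (measure_ball_pos _ _ one_pos).ne' measure_ball_lt_top.ne
  obtain ⟨c', hc', hc'c⟩ := exists_between hc
  have hc'0 : 0 < c' := (Real.rpow_nonneg (by positivity) _).trans_lt hc'
  have hκ : 2 < η * v * c' ^ d := by
    rw [one_div, Real.rpow_inv_lt_iff_of_pos (by positivity) hc'0.le (by positivity),
      Real.rpow_natCast, div_lt_iff₀ (by positivity)] at hc'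
    linarith
  have hrate := (show IsStandard μ M η lam from hstd).ae_eventually_hausdorffDist_le hindep
    hmeas hid hMcomp hXM (by simpa using hd.ne') hη hlam (sub_pos.2 hc'c) hc'0
    (by simpa using hκ)
  simpa [logRate] using hrate

/-- Theorem 3 of Cuevas–Rodríguez-Casal: rate of convergence of the Hausdorff
distance between an iid sample and its compact standard support. -/
theorem hausdorff_rate {d : ℕ} (hd : 0 < d)
    {Ω : Type*} [MeasureSpace Ω] [IsProbabilityMeasure (ℙ : Measure Ω)]
    (X : ℕ → Ω → EuclideanSpace ℝ (Fin d)) (hmeas : ∀ i, Measurable (X i))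
    (hindep : ProbabilityTheory.iIndepFun X ℙ)
    (μ : Measure (EuclideanSpace ℝ (Fin d))) [IsProbabilityMeasure μ]
    (hid : ∀ i, Measure.map (X i) ℙ = μ)
    (M : Set (EuclideanSpace ℝ (Fin d))) (hMcomp : IsCompact M)
    (hMne : M.Nonempty) (hμM : μ M = 1) (hXM : ∀ i, ∀ᵐ ω, X i ω ∈ M)
    (η lam : ℝ) (hη : 0 < η) (hlam : 0 < lam)
    (hstd : ∀ x ∈ M, ∀ ε : ℝ, 0 < ε → ε ≤ lam →
      ENNReal.ofReal η * volume (Metric.closedBall x ε) ≤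
        μ (Metric.closedBall x ε ∩ M))
    (c : ℝ)
    (hc : (2 / (η * (volume (Metric.ball (0 : EuclideanSpace ℝ (Fin d)) 1)).toReal))
        ^ (1 / (d : ℝ)) < c) :
    ∀ᵐ ω, ∀ᶠ n : ℕ in atTop,
      Metric.hausdorffDist ((fun i => X i ω) '' {i | i < n}) M ≤
        c * (Real.log n / n) ^ (1 / (d : ℝ)) :=
  hausdorff_rate_general hd X hmeas hindep μ hid M hMcomp hXM η lam hη hlam hstd c hc
end

section
/- If $M \subset \mathbb{R}^d$ is the support of a density and $\mathrm{reach}(M) > 0$, then the boundary $\partial M$ has $d$-dimensional Lebesgue measure zero and the interior of $M$ is nonempty. -/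
open MeasureTheory Metric
open scoped RealInnerProductSpace

/-- Federer's reach of a set `M ⊆ ℝ^d` (valued in `ℝ≥0∞`): the supremum of the
radii `r` such that every point at distance `< r` from `M` has a unique nearest
point in `M`. -/
noncomputable def reach {d : ℕ} (M : Set (EuclideanSpace ℝ (Fin d))) : ENNReal :=
  sSup {r : ENNReal | ∀ x, EMetric.infEdist x M < r →
    ∃! y, y ∈ M ∧ edist x y = EMetric.infEdist x M}

/-- The (topological) support of a measure: points all of whose neighborhoods
have positive measure. -/
def mSupport {d : ℕ} (μ : Measure (EuclideanSpace ℝ (Fin d))) :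
    Set (EuclideanSpace ℝ (Fin d)) :=
  {x | ∀ U ∈ nhds x, μ U ≠ 0}

/-- The support of a density `f`: the support of the measure with density `f`
with respect to Lebesgue measure. -/
def densSupport {d : ℕ} (f : EuclideanSpace ℝ (Fin d) → ℝ) :
    Set (EuclideanSpace ℝ (Fin d)) :=
  mSupport (volume.withDensity fun x => ENNReal.ofReal (f x))

/-- `f` is a probability density with respect to Lebesgue measure on `ℝ^d`. -/
def IsDensity {d : ℕ} (f : EuclideanSpace ℝ (Fin d) → ℝ) : Prop :=
  Measurable f ∧ (∀ x, 0 ≤ f x) ∧ ∫ x, f x = 1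

/-- Concentration of near-nearest points around the unique nearest point. -/
lemma near_nearest {d : ℕ} {M : Set (EuclideanSpace ℝ (Fin d))} (hMcl : IsClosed M)
    {x ξ : EuclideanSpace ℝ (Fin d)} {δ : ℝ}
    (hδ : infDist x M = δ) (hξM : ξ ∈ M)
    (huniq : ∀ z ∈ M, dist x z = δ → z = ξ) {ε : ℝ} (hε : 0 < ε) :
    ∃ η > 0, ∀ z ∈ M, dist x z ≤ δ + η → dist z ξ < ε := by
  classical
  set C : Set (EuclideanSpace ℝ (Fin d)) := (M ∩ closedBall x (δ + 1)) ∩ (ball ξ ε)ᶜ with hC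
  have hCcl : IsClosed C := (hMcl.inter isClosed_closedBall).inter isOpen_ball.isClosed_compl
  have hCb : Bornology.IsBounded C :=
    (isBounded_closedBall (x := x) (r := δ + 1)).subset
      (fun z hz => hz.1.2)
  have hCcomp : IsCompact C := Metric.isCompact_of_isClosed_isBounded hCcl hCb
  rcases C.eq_empty_or_nonempty with hCe | hCne
  · refine ⟨1, one_pos, fun z hzM hdz => ?_⟩
    by_contra hcon
    have hzC : z ∈ C := ⟨⟨hzM, mem_closedBall'.mpr hdz⟩, fun h => hcon (mem_ball.mp h)⟩
    rw [hCe] at hzC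
    exact hzC
  · obtain ⟨z₀, hz₀C, hz₀min⟩ :=
      hCcomp.exists_isMinOn hCne ((continuous_const.dist continuous_id).continuousOn)
    have hz₀M : z₀ ∈ M := hz₀C.1.1
    have hz₀d : δ ≤ dist x z₀ := hδ ▸ infDist_le_dist_of_mem hz₀M
    have hz₀ne : δ < dist x z₀ := by
      rcases lt_or_eq_of_le hz₀d with h | h
      · exact h
      · exfalso
        have : z₀ = ξ := huniq z₀ hz₀M h.symm
        have : z₀ ∈ ball ξ ε := by
          rw [this]; exact mem_ball_self hε
        exact hz₀C.2 this
    refine ⟨min ((dist x z₀ - δ) / 2) 1, lt_min (by linarith) one_pos, fun z hzM hdz => ?_⟩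
    by_contra hcon
    have hzC : z ∈ C := by
      refine ⟨⟨hzM, mem_closedBall'.mpr ?_⟩, fun h => hcon (mem_ball.mp h)⟩
      have := min_le_right ((dist x z₀ - δ) / 2) 1
      linarith
    have h1 : dist x z₀ ≤ dist x z := hz₀min hzC
    have h2 := min_le_left ((dist x z₀ - δ) / 2) 1
    linarith

set_option maxHeartbeats 1000000 in
/-- Strict growth of the distance function when moving away from the unique
nearest point along the normal direction. -/
lemma dist_growth {d : ℕ} {M : Set (EuclideanSpace ℝ (Fin d))} (hMcl : IsClosed M)
    (hMne : M.Nonempty) {x ξ : EuclideanSpace ℝ (Fin d)} {δ : ℝ}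
    (hδ : infDist x M = δ) (hδ0 : 0 < δ) (hξM : ξ ∈ M) (hξd : dist x ξ = δ)
    (huniq : ∀ z ∈ M, dist x z = δ → z = ξ) {ε : ℝ} (hε : 0 < ε) :
    ∃ s, 0 < s ∧ s < ε ∧ δ + s / 2 < infDist (x + s • (δ⁻¹ • (x - ξ))) M := by
  obtain ⟨η, hη0, hη⟩ := near_nearest hMcl hδ hξM huniq (ε := δ / 8) (by positivity)
  set u : EuclideanSpace ℝ (Fin d) := δ⁻¹ • (x - ξ) with hu_def
  have hxξ : ‖x - ξ‖ = δ := by rw [← dist_eq_norm]; exact hξd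
  have hu : ‖u‖ = 1 := by
    rw [hu_def, norm_smul, hxξ, Real.norm_eq_abs, abs_inv, abs_of_pos hδ0,
      inv_mul_cancel₀ hδ0.ne']
  set s := min (ε / 2) (min (η / 2) δ) with hs_def
  have hs0 : 0 < s := lt_min (by positivity) (lt_min (by positivity) hδ0)
  have hsε : s < ε := lt_of_le_of_lt (min_le_left _ _) (by linarith)
  have hsη : s ≤ η / 2 := le_trans (min_le_right _ _) (min_le_left _ _)
  refine ⟨s, hs0, hsε, ?_⟩
  set x' := x + s • u with hx'_def
  by_contra hcon
  push_neg at hcon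
  obtain ⟨z, hzM, hzd⟩ := hMcl.exists_infDist_eq_dist hMne x'
  have h1 : dist x' z ≤ δ + s / 2 := hzd ▸ hcon
  have hdxx' : dist x x' = s := by
    rw [dist_eq_norm]
    simp only [hx'_def]
    rw [show x - (x + s • u) = -(s • u) by abel, norm_neg, norm_smul, hu,
      Real.norm_eq_abs, abs_of_pos hs0, mul_one]
  have h2 : dist x z ≤ δ + η := by
    have := dist_triangle x x' z
    rw [hdxx'] at this
    linarith
  have h3 : dist z ξ < δ / 8 := hη z hzM h2
  -- inner product estimate
  have hinner1 : ⟪x - ξ, u⟫ = δ := by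
    rw [hu_def, real_inner_smul_right, real_inner_self_eq_norm_mul_norm, hxξ]
    field_simp
  have hinner2 : |⟪ξ - z, u⟫| ≤ δ / 8 := by
    calc |⟪ξ - z, u⟫| ≤ ‖ξ - z‖ * ‖u‖ := abs_real_inner_le_norm _ _
    _ = dist z ξ := by rw [hu, mul_one, ← dist_eq_norm, dist_comm]
    _ ≤ δ / 8 := h3.le
  have hinner : (7 / 8 : ℝ) * δ ≤ ⟪x - z, u⟫ := by
    have : ⟪x - z, u⟫ = ⟪x - ξ, u⟫ + ⟪ξ - z, u⟫ := by
      rw [← inner_add_left]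
      norm_num
    rw [this, hinner1]
    have := abs_le.mp hinner2
    linarith [this.1]
  have hw : δ ≤ ‖x - z‖ := by
    rw [← dist_eq_norm]
    exact hδ ▸ infDist_le_dist_of_mem hzM
  have hsq : dist x' z ^ 2 = ‖x - z‖ ^ 2 + 2 * (s * ⟪x - z, u⟫) + s ^ 2 := by
    rw [dist_eq_norm, show x' - z = (x - z) + s • u by rw [hx'_def]; abel,
      norm_add_sq_real, real_inner_smul_right, norm_smul, Real.norm_eq_abs,
      abs_of_pos hs0, hu, mul_one]
  have h1' : dist x' z ^ 2 ≤ (δ + s / 2) ^ 2 := by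
    have := dist_nonneg (x := x') (y := z)
    nlinarith
  have hw2 : δ ^ 2 ≤ ‖x - z‖ ^ 2 := by nlinarith
  nlinarith [mul_pos hs0 hδ0, mul_le_mul_of_nonneg_left hinner (le_of_lt hs0)]

/-- Porosity of the boundary: near every frontier point of `M`, at every scale
below the reach, there is a ball of proportional radius avoiding `M`. -/
lemma porosity {d : ℕ} {M : Set (EuclideanSpace ℝ (Fin d))} (hMcl : IsClosed M)
    (hMne : M.Nonempty) {r : ℝ} (hr : 0 < r)
    (hU : ∀ x : EuclideanSpace ℝ (Fin d), infDist x M < r →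
      ∃! y, y ∈ M ∧ dist x y = infDist x M)
    {x : EuclideanSpace ℝ (Fin d)} (hx : x ∈ frontier M)
    {ρ : ℝ} (hρ0 : 0 < ρ) (hρr : ρ < r) :
    ∃ y, closedBall y (ρ / 5) ⊆ closedBall x ρ ∧ Disjoint (closedBall y (ρ / 5)) M := by
  have hxM : x ∈ M := by
    rw [← hMcl.closure_eq]
    exact hx.1
  -- find a nearby exterior point
  obtain ⟨y₀, hy₀b, hy₀M⟩ : ∃ y₀ ∈ ball x (ρ / 10), y₀ ∉ M := by
    by_contra hcon
    push_neg at hcon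
    exact hx.2 (mem_interior.mpr ⟨ball x (ρ / 10), hcon, isOpen_ball,
      mem_ball_self (by positivity)⟩)
  set δ₀ := infDist y₀ M with hδ₀_def
  have hδ₀0 : 0 < δ₀ := by
    rcases lt_or_eq_of_le (infDist_nonneg (x := y₀) (s := M)) with h | h
    · exact h
    · exact absurd ((hMcl.mem_iff_infDist_zero hMne).mpr h.symm) hy₀M
  have hδ₀x : δ₀ ≤ dist y₀ x := infDist_le_dist_of_mem hxM
  have hδ₀ρ : δ₀ < ρ / 10 := lt_of_le_of_lt hδ₀x (mem_ball.mp hy₀b)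
  obtain ⟨ξ₀, hξ₀M, hξ₀d⟩ := hMcl.exists_infDist_eq_dist hMne y₀
  -- maximize the penalized distance function over a ball around ξ₀
  set Ψ : EuclideanSpace ℝ (Fin d) → ℝ := fun y => 2 * infDist y M - dist y ξ₀ with hΨ_def
  have hΨc : Continuous Ψ :=
    (continuous_const.mul (continuous_infDist_pt M)).sub (continuous_id.dist continuous_const)
  obtain ⟨y₂, hy₂K, hy₂max⟩ :=
    (isCompact_closedBall ξ₀ (ρ / 2)).exists_isMaxOn
      ⟨ξ₀, mem_closedBall_self (by positivity)⟩ hΨc.continuousOn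
  have hy₀K : y₀ ∈ closedBall ξ₀ (ρ / 2) := by
    rw [mem_closedBall, ← hξ₀d]
    linarith
  have hdy₀ξ₀ : dist y₀ ξ₀ = δ₀ := by rw [← hξ₀d]
  have hΨy₀ : Ψ y₀ = δ₀ := by
    simp only [hΨ_def, hdy₀ξ₀, ← hδ₀_def]
    ring
  have hΨ2 : δ₀ ≤ Ψ y₂ := hΨy₀ ▸ hy₂max hy₀K
  set δ₂ := infDist y₂ M with hδ₂_def
  have hΨval : Ψ y₂ = 2 * δ₂ - dist y₂ ξ₀ := rfl
  have hkey : 2 * δ₂ ≥ δ₀ + dist y₂ ξ₀ := by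
    rw [hΨval] at hΨ2; linarith
  have hδ₂K : δ₂ ≤ dist y₂ ξ₀ := infDist_le_dist_of_mem hξ₀M
  have hy₂ξ₀ : dist y₂ ξ₀ ≤ ρ / 2 := mem_closedBall.mp hy₂K
  have hδ₂0 : 0 < δ₂ := by linarith
  have hδ₂r : δ₂ < r := by linarith
  -- the maximizer must be on the boundary sphere
  have hbdry : dist y₂ ξ₀ = ρ / 2 := by
    by_contra hcon
    have hlt : dist y₂ ξ₀ < ρ / 2 := lt_of_le_of_ne hy₂ξ₀ hcon
    obtain ⟨ξ₂, ⟨hξ₂M, hξ₂d⟩, huniq2⟩ := hU y₂ hδ₂r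
    have huniq' : ∀ z ∈ M, dist y₂ z = δ₂ → z = ξ₂ := fun z hz hdz =>
      huniq2 z ⟨hz, hdz⟩
    obtain ⟨s, hs0, hsε, hgrow⟩ := dist_growth hMcl hMne hδ₂_def.symm hδ₂0 hξ₂M hξ₂d
      huniq' (ε := ρ / 2 - dist y₂ ξ₀) (by linarith)
    set u₂ : EuclideanSpace ℝ (Fin d) := δ₂⁻¹ • (y₂ - ξ₂) with hu₂_def
    have hu₂ : ‖u₂‖ = 1 := by
      rw [hu₂_def, norm_smul, ← dist_eq_norm, hξ₂d, Real.norm_eq_abs, abs_inv,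
        abs_of_pos hδ₂0, inv_mul_cancel₀ hδ₂0.ne']
    set y' := y₂ + s • u₂ with hy'_def
    have hdyy' : dist y' y₂ = s := by
      rw [dist_eq_norm, show y' - y₂ = s • u₂ by rw [hy'_def]; abel, norm_smul,
        Real.norm_eq_abs, abs_of_pos hs0, hu₂, mul_one]
    have hy'K : y' ∈ closedBall ξ₀ (ρ / 2) := by
      rw [mem_closedBall]
      calc dist y' ξ₀ ≤ dist y' y₂ + dist y₂ ξ₀ := dist_triangle _ _ _
      _ = s + dist y₂ ξ₀ := by rw [hdyy']
      _ ≤ ρ / 2 := by linarith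
    have hΨy' : Ψ y₂ < Ψ y' := by
      have hd' : dist y' ξ₀ ≤ dist y₂ ξ₀ + s := by
        have := dist_triangle y' y₂ ξ₀
        rw [hdyy'] at this
        linarith
      have hΨ'val : Ψ y' = 2 * infDist y' M - dist y' ξ₀ := rfl
      rw [hΨval, hΨ'val]
      linarith [hgrow, hd']
    exact absurd (hy₂max hy'K) (not_le.mpr hΨy')
  have hδ₂big : ρ / 4 < δ₂ := by
    rw [hbdry] at hkey
    linarith
  refine ⟨y₂, fun z hz => ?_, Set.disjoint_left.mpr fun z hz hzM => ?_⟩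
  · rw [mem_closedBall] at hz ⊢
    have hd1 : dist y₂ x ≤ dist y₂ ξ₀ + dist ξ₀ y₀ + dist y₀ x := by
      linarith [dist_triangle y₂ ξ₀ x, dist_triangle ξ₀ y₀ x]
    have hd2 : dist ξ₀ y₀ = δ₀ := by rw [dist_comm, ← hξ₀d]
    have := dist_triangle z y₂ x
    rw [hbdry] at hd1
    rw [hd2] at hd1
    have hyx : dist y₀ x < ρ / 10 := mem_ball.mp hy₀b
    linarith
  · rw [mem_closedBall] at hz
    have : δ₂ ≤ dist y₂ z := infDist_le_dist_of_mem hzM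
    rw [dist_comm] at this
    linarith

/-- The frontier of a closed set with the unique-nearest-point property at scale
`r` is Lebesgue-null. -/
lemma frontier_volume_zero {d : ℕ} {M : Set (EuclideanSpace ℝ (Fin d))} (hMcl : IsClosed M)
    (hMne : M.Nonempty) {r : ℝ} (hr : 0 < r)
    (hU : ∀ x : EuclideanSpace ℝ (Fin d), infDist x M < r →
      ∃! y, y ∈ M ∧ dist x y = infDist x M) :
    volume (frontier M) = 0 := by
  classical
  by_contra hS
  set S := frontier M with hS_def
  have hSm : MeasurableSet S := isClosed_frontier.measurableSet
  have hSM : S ⊆ M := hMcl.frontier_subset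
  have hbes := Besicovitch.ae_tendsto_measure_inter_div (volume :
    Measure (EuclideanSpace ℝ (Fin d))) S
  have hmem : ∀ᵐ x ∂(volume.restrict S), x ∈ S := ae_restrict_mem hSm
  have hne : (Filter.NeBot (ae (volume.restrict S))) := by
    rw [ae_neBot, Ne, Measure.restrict_eq_zero]
    exact hS
  obtain ⟨x, hxS, hxT⟩ := (hmem.and hbes).exists
  set c : ENNReal := ENNReal.ofReal (1 - (1 / 5 : ℝ) ^ d) with hc_def
  have hc1 : c < 1 := by
    rw [hc_def, ← ENNReal.ofReal_one]
    rw [ENNReal.ofReal_lt_ofReal_iff one_pos]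
    have : (0 : ℝ) < (1 / 5 : ℝ) ^ d := by positivity
    linarith
  have hB0 : volume (ball (0 : EuclideanSpace ℝ (Fin d)) 1) ≠ 0 :=
    (measure_ball_pos volume 0 one_pos).ne'
  have hBtop : volume (ball (0 : EuclideanSpace ℝ (Fin d)) 1) ≠ ⊤ :=
    measure_ball_lt_top.ne
  have hev : ∀ᶠ ρ in nhdsWithin (0 : ℝ) (Set.Ioi 0),
      volume (S ∩ closedBall x ρ) / volume (closedBall x ρ) ≤ c := by
    filter_upwards [Ioo_mem_nhdsGT_of_mem (Set.mem_Ico.mpr ⟨le_refl (0 : ℝ), hr⟩)]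
      with ρ hρ
    obtain ⟨hρ0, hρr⟩ := hρ
    obtain ⟨y, hsub, hdisj⟩ := porosity hMcl hMne hr hU hxS hρ0 hρr
    set B := volume (ball (0 : EuclideanSpace ℝ (Fin d)) 1) with hB_def
    have hV : volume (closedBall x ρ) = ENNReal.ofReal (ρ ^ d) * B := by
      rw [Measure.addHaar_closedBall volume x hρ0.le, finrank_euclideanSpace_fin]
    have hv : volume (closedBall y (ρ / 5)) = ENNReal.ofReal ((ρ / 5) ^ d) * B := by
      rw [Measure.addHaar_closedBall volume y (by positivity : (0:ℝ) ≤ ρ / 5),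
        finrank_euclideanSpace_fin]
    have hsub2 : S ∩ closedBall x ρ ⊆ closedBall x ρ \ closedBall y (ρ / 5) := by
      rintro z ⟨hzS, hzB⟩
      exact ⟨hzB, fun hzb => (Set.disjoint_left.mp hdisj hzb) (hSM hzS)⟩
    have hle : volume (S ∩ closedBall x ρ) ≤
        volume (closedBall x ρ) - volume (closedBall y (ρ / 5)) := by
      refine (measure_mono hsub2).trans (le_of_eq ?_)
      exact measure_diff hsub measurableSet_closedBall.nullMeasurableSet
        measure_closedBall_lt_top.ne
    have hfactor : ENNReal.ofReal (ρ ^ d) * B - ENNReal.ofReal ((ρ / 5) ^ d) * B =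
        c * (ENNReal.ofReal (ρ ^ d) * B) := by
      rw [← ENNReal.sub_mul (fun _ _ => hBtop),
        ← ENNReal.ofReal_sub _ (by positivity : (0:ℝ) ≤ (ρ / 5) ^ d)]
      rw [hc_def, ← mul_assoc, ← ENNReal.ofReal_mul (by
        have : (1 / 5 : ℝ) ^ d ≤ 1 := pow_le_one₀ (by norm_num) (by norm_num)
        linarith)]
      congr 1
      rw [div_pow, div_pow]
      ring
    have hV0 : ENNReal.ofReal (ρ ^ d) * B ≠ 0 :=
      mul_ne_zero (ENNReal.ofReal_pos.mpr (by positivity)).ne' hB0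
    have hVtop : ENNReal.ofReal (ρ ^ d) * B ≠ ⊤ :=
      ENNReal.mul_ne_top ENNReal.ofReal_ne_top hBtop
    calc volume (S ∩ closedBall x ρ) / volume (closedBall x ρ)
        ≤ (c * (ENNReal.ofReal (ρ ^ d) * B)) / (ENNReal.ofReal (ρ ^ d) * B) := by
          rw [hV]
          refine ENNReal.div_le_div_right ?_ _
          rw [← hfactor, ← hV, ← hv]
          exact hle
      _ = c := by rw [mul_div_assoc, ENNReal.div_self hV0 hVtop, mul_one]
  have : (1 : ENNReal) ≤ c := le_of_tendsto hxT hev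
  exact absurd this (not_le.mpr hc1)

/-- If the support of a density has positive reach, then its boundary is
Lebesgue-null and its interior is nonempty. -/
theorem support_positive_reach_boundary_null {d : ℕ}
    (f : EuclideanSpace ℝ (Fin d) → ℝ) (hf : IsDensity f)
    (M : Set (EuclideanSpace ℝ (Fin d))) (hM : M = densSupport f)
    (hreach : 0 < reach M) :
    volume (frontier M) = 0 ∧ (interior M).Nonempty := by
  obtain ⟨hfm, hfnn, hfint⟩ := hf
  set g : EuclideanSpace ℝ (Fin d) → ENNReal := fun x => ENNReal.ofReal (f x) with hg_def
  set μ := volume.withDensity g with hμ_def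
  -- μ is a probability measure
  have hfi : Integrable f volume := by
    by_contra h
    rw [integral_undef h] at hfint
    norm_num at hfint
  have hμuniv : μ Set.univ = 1 := by
    rw [hμ_def, withDensity_apply _ MeasurableSet.univ, setLIntegral_univ,
      ← ofReal_integral_eq_lintegral_ofReal hfi (Filter.Eventually.of_forall hfnn),
      hfint, ENNReal.ofReal_one]
  -- M is closed
  have hMsupp : M = {x | ∀ U ∈ nhds x, μ U ≠ 0} := hM
  have hMcl : IsClosed M := by
    rw [← isOpen_compl_iff, isOpen_iff_mem_nhds]
    intro y hy
    rw [hMsupp] at hy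
    simp only [Set.mem_compl_iff, Set.mem_setOf_eq, not_forall] at hy
    obtain ⟨U, hU, hμU⟩ := hy
    push_neg at hμU
    refine Filter.mem_of_superset (interior_mem_nhds.mpr hU) fun z hz => ?_
    rw [Set.mem_compl_iff, hMsupp, Set.mem_setOf_eq]
    push_neg
    exact ⟨U, Filter.mem_of_superset (isOpen_interior.mem_nhds hz) interior_subset, hμU⟩
  -- complement of the support is null
  have hMc0 : μ Mᶜ = 0 := by
    refine measure_null_of_locally_null _ fun y hy => ?_
    rw [Set.mem_compl_iff, hMsupp, Set.mem_setOf_eq] at hy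
    push_neg at hy
    obtain ⟨U, hU, hμU⟩ := hy
    exact ⟨U, mem_nhdsWithin_of_mem_nhds hU, hμU⟩
  -- M has positive volume
  have hMvol : volume M ≠ 0 := by
    intro h0
    have hμM : μ M = 0 := by
      rw [hμ_def]
      exact withDensity_absolutelyContinuous volume g h0
    have : μ Set.univ ≤ μ M + μ Mᶜ := by
      rw [← Set.union_compl_self M]
      exact measure_union_le _ _
    rw [hμuniv, hμM, hMc0] at this
    simp at this
  have hMne : M.Nonempty := by
    rw [Set.nonempty_iff_ne_empty]
    rintro rfl
    exact hMvol (measure_empty)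
  -- extract a positive real radius from the reach
  obtain ⟨r₀, hr₀mem, hr₀0⟩ := lt_sSup_iff.mp hreach
  set r : ℝ := if h : r₀ = ⊤ then 1 else r₀.toReal with hr_def
  have hr0 : 0 < r := by
    rw [hr_def]
    split
    · exact one_pos
    · exact ENNReal.toReal_pos hr₀0.ne' (by assumption)
  have hofr : ENNReal.ofReal r ≤ r₀ := by
    rw [hr_def]
    split
    · rename_i h; rw [h]; exact le_top
    · rename_i h; rw [ENNReal.ofReal_toReal h]
  have hU : ∀ x : EuclideanSpace ℝ (Fin d), infDist x M < r →
      ∃! y, y ∈ M ∧ dist x y = infDist x M := by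
    intro x hx
    have hne_top : EMetric.infEdist x M ≠ ⊤ := Metric.infEdist_ne_top hMne
    have hlt : EMetric.infEdist x M < r₀ := by
      refine lt_of_lt_of_le ?_ hofr
      rw [ENNReal.lt_ofReal_iff_toReal_lt hne_top]
      exact hx
    obtain ⟨y, ⟨hyM, hyd⟩, hyu⟩ := hr₀mem x hlt
    have hinf_eq : EMetric.infEdist x M = ENNReal.ofReal (infDist x M) := by
      rw [Metric.infDist]; exact (ENNReal.ofReal_toReal hne_top).symm
    refine ⟨y, ⟨hyM, ?_⟩, ?_⟩
    · rw [dist_edist, hyd]; rfl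
    · rintro z ⟨hzM, hzd⟩
      refine hyu z ⟨hzM, ?_⟩
      rw [hinf_eq, ← hzd, edist_dist]
  have hfront := frontier_volume_zero hMcl hMne hr0 hU
  refine ⟨hfront, ?_⟩
  by_contra hcon
  rw [Set.not_nonempty_iff_eq_empty] at hcon
  have : M ⊆ frontier M := by
    rw [hMcl.frontier_eq, hcon, Set.diff_empty]
  exact hMvol (measure_mono_null this hfront)
end
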